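/- Let p and q be distinct primes. The number of edges of the power graph of D_{2pq} equals (1/2)[(2pq - 1) + (p-1)(q-1)(pq - 1) + (q-1)(pq - p) + (p-1)(pq - q) + pq]. -/

import Mathlib

/-!
The reflections of `D_n` have order 2, so a reflection is adjacent only to the identity, and
the remaining edges join rotations; the rotations form a cyclic group `C_n`, so the power graph
of `D_n` has `n` more edges than that of `C_n`. In a finite cyclic group `x` is a power of `y`
iff `orderOf x ∣ orderOf y`. For `n = pq` the orders are `1, p, q, pq`, so two distinct elements
are non-adjacent exactly when their orders are `p` and `q`; there are `φ p = p - 1` and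
`φ q = q - 1` elements of these orders. Hence `2|E(C_pq)| = pq(pq - 1) - 2(p - 1)(q - 1)`.
-/

open Polynomial

/-- The power graph of a group: distinct `x, y` are adjacent iff one is an
integral power of the other. -/
def powerGraph (G : Type*) [Group G] : SimpleGraph G where
  Adj x y := x ≠ y ∧ (x ∈ Subgroup.zpowers y ∨ y ∈ Subgroup.zpowers x)
  symm := ⟨fun _ _ h => ⟨h.1.symm, h.2.symm⟩⟩
  loopless := ⟨fun _ h => h.1 rfl⟩

open Finset Subgroup

theorem SimpleGraph.two_mul_ncard_edgeSet_eq_card_adj {V : Type*} [Fintype V]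
    (G : SimpleGraph V) [DecidableRel G.Adj] :
    2 * G.edgeSet.ncard = #{z : V × V | G.Adj z.1 z.2} := by
  rw [← coe_edgeFinset, Set.ncard_coe_finset, ← sum_degrees_eq_twice_card_edges, card_filter,
    Fintype.sum_prod_type]
  simp only [← card_neighborFinset_eq_degree, neighborFinset_eq_filter, card_filter]

theorem powerGraph_adj_map_iff {G H : Type*} [Group G] [Group H] {f : G →* H}
    (hf : Function.Injective f) {x y : G} :
    (powerGraph H).Adj (f x) (f y) ↔ (powerGraph G).Adj x y := by
  simp only [powerGraph, ← MonoidHom.map_zpowers, mem_map_iff_mem hf, hf.ne_iff]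

theorem mem_zpowers_iff_of_orderOf_eq_two {G : Type*} [Group G] {g x : G}
    (hg : orderOf g = 2) : x ∈ zpowers g ↔ x = 1 ∨ x = g := by
  classical
  rw [(orderOf_pos_iff.mp (hg ▸ two_pos)).mem_zpowers_iff_mem_range_orderOf, hg]
  simp [Nat.le_one_iff_eq_zero_or_eq_one, or_and_right, exists_or, eq_comm]

-- `zpowers y` has `orderOf y` elements, all roots of `a ^ orderOf y = 1`, and a cyclic group
-- has at most that many such roots; so these roots, `x` among them, are exactly `zpowers y`.
theorem IsCyclic.mem_zpowers_iff_orderOf_dvd {G : Type*} [Group G] [Finite G] [IsCyclic G]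
    {x y : G} : x ∈ zpowers y ↔ orderOf x ∣ orderOf y := by
  classical
  have := Fintype.ofFinite G
  refine ⟨orderOf_dvd_of_mem_zpowers, fun h => ?_⟩
  set roots : Finset G := {a | a ^ orderOf y = 1}
  have hsub : (zpowers y : Set G).toFinset ⊆ roots := by
    intro a ha
    rw [Set.mem_toFinset, SetLike.mem_coe] at ha
    simpa [roots] using orderOf_dvd_iff_pow_eq_one.mp (orderOf_dvd_of_mem_zpowers ha)
  have heq := eq_of_subset_of_card_le hsub (by
    rw [Set.toFinset_card, ← Nat.card_eq_fintype_card, SetLike.coe_sort_coe, Nat.card_zpowers]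
    exact IsCyclic.card_pow_eq_one_le (orderOf_pos y))
  have hx : x ∈ roots := by simpa [roots] using orderOf_dvd_iff_pow_eq_one.mp h
  simpa [← heq] using hx

theorem Nat.not_dvd_or_dvd_iff_of_dvd_mul_primes {p q d e : ℕ} (hp : p.Prime) (hq : q.Prime)
    (hpq : p ≠ q) (hd : d ∣ p * q) (he : e ∣ p * q) :
    ¬(d ∣ e ∨ e ∣ d) ↔ d = p ∧ e = q ∨ d = q ∧ e = p := by
  have hdiv {k : ℕ} (hk : k ∣ p * q) : k = 1 ∨ k = p ∨ k = q ∨ k = p * q := by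
    have := Nat.mem_divisors.mpr ⟨hk, mul_ne_zero hp.ne_zero hq.ne_zero⟩
    rw [Nat.divisors_mul, hp.divisors, hq.divisors] at this
    simp only [mem_mul, mem_insert, mem_singleton] at this
    aesop
  have hp_ndvd_q : ¬p ∣ q := fun h => hpq ((Nat.prime_dvd_prime_iff_eq hp hq).mp h)
  have hq_ndvd_p : ¬q ∣ p := fun h => hpq ((Nat.prime_dvd_prime_iff_eq hq hp).mp h).symm
  have hqp : q ≠ p := hpq.symm
  have hp1 := hp.one_lt.ne
  have hq1 := hq.one_lt.ne
  have hpq_ne_p : p * q ≠ p := fun h => hq.ne_one ((Nat.mul_eq_left hp.ne_zero).mp h)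
  have hpq_ne_q : p * q ≠ q := fun h => hp.ne_one ((Nat.mul_eq_right hq.ne_zero).mp h)
  rcases hdiv hd with rfl | rfl | rfl | rfl <;> rcases hdiv he with rfl | rfl | rfl | rfl <;>
    simp_all

namespace IsCyclic

variable {C : Type*} [Group C] [Fintype C] [IsCyclic C] {p q : ℕ}

theorem powerGraph_adj_iff_of_card_eq_mul_primes (hp : p.Prime) (hq : q.Prime) (hpq : p ≠ q)
    (hC : Fintype.card C = p * q) {x y : C} :
    (powerGraph C).Adj x y ↔
      x ≠ y ∧ ¬(orderOf x = p ∧ orderOf y = q ∨ orderOf x = q ∧ orderOf y = p) := by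
  have hdvd (z : C) : orderOf z ∣ p * q := hC ▸ orderOf_dvd_card
  rw [← Nat.not_dvd_or_dvd_iff_of_dvd_mul_primes hp hq hpq (hdvd x) (hdvd y), not_not,
    ← mem_zpowers_iff_orderOf_dvd, ← mem_zpowers_iff_orderOf_dvd]
  rfl

theorem two_mul_ncard_edgeSet_powerGraph_add (hp : p.Prime) (hq : q.Prime) (hpq : p ≠ q)
    (hC : Fintype.card C = p * q) :
    2 * (powerGraph C).edgeSet.ncard + 2 * ((p - 1) * (q - 1)) = p * q * (p * q - 1) := by
  classical
  have hcard {r : ℕ} (hr : r.Prime) (hdvd : r ∣ p * q) : #{x : C | orderOf x = r} = r - 1 := by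
    rw [card_orderOf_eq_totient (hC ▸ hdvd), Nat.totient_prime hr]
  have hprod {r s : ℕ} (hr : r.Prime) (hs : s.Prime) (hrd : r ∣ p * q) (hsd : s ∣ p * q) :
      #{z : C × C | orderOf z.1 = r ∧ orderOf z.2 = s} = (r - 1) * (s - 1) := by
    rw [← univ_product_univ, filter_product (fun x : C => orderOf x = r) (fun y => orderOf y = s),
      card_product, hcard hr hrd, hcard hs hsd]
  set Incomparable : C × C → Prop :=
    fun z => orderOf z.1 = p ∧ orderOf z.2 = q ∨ orderOf z.1 = q ∧ orderOf z.2 = p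
  have hadj : #{z : C × C | (powerGraph C).Adj z.1 z.2} =
      #{z ∈ (univ : Finset C).offDiag | ¬Incomparable z} := by
    congr 1
    ext z
    simp [powerGraph_adj_iff_of_card_eq_mul_primes hp hq hpq hC, Incomparable]
  have hincomparable : {z ∈ (univ : Finset C).offDiag | Incomparable z} =
      univ.filter (fun z : C × C => orderOf z.1 = p ∧ orderOf z.2 = q) ∪
        univ.filter (fun z : C × C => orderOf z.1 = q ∧ orderOf z.2 = p) := by
    ext z
    simp only [mem_filter, mem_offDiag, mem_univ, true_and, mem_union, Incomparable]
    refine ⟨And.right, fun h => ⟨fun heq => ?_, h⟩⟩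
    rcases h with ⟨h1, h2⟩ | ⟨h1, h2⟩ <;> rw [heq] at h1 <;> exact hpq (by rw [← h1, h2])
  have hdisj : Disjoint (univ.filter fun z : C × C => orderOf z.1 = p ∧ orderOf z.2 = q)
      (univ.filter fun z : C × C => orderOf z.1 = q ∧ orderOf z.2 = p) := by
    simp only [disjoint_filter]
    rintro z - ⟨h1, -⟩ ⟨h2, -⟩
    exact hpq (h1.symm.trans h2)
  have hsplit := card_filter_add_card_filter_not (s := (univ : Finset C).offDiag) Incomparable
  rw [hincomparable, card_union_of_disjoint hdisj,
    hprod hp hq (dvd_mul_right p q) (dvd_mul_left q p),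
    hprod hq hp (dvd_mul_left q p) (dvd_mul_right p q), offDiag_card, card_univ, hC,
    ← Nat.mul_sub_one] at hsplit
  rw [SimpleGraph.two_mul_ncard_edgeSet_eq_card_adj, hadj, ← hsplit]
  ring

end IsCyclic

namespace DihedralGroup

variable {n : ℕ}

def rotationHom : Multiplicative (ZMod n) →* DihedralGroup n where
  toFun i := r i.toAdd
  map_one' := rfl
  map_mul' _ _ := rfl

theorem rotationHom_injective : Function.Injective (rotationHom (n := n)) :=
  fun _ _ h => r.inj h

theorem sum_eq_sum_r_add_sum_sr [NeZero n] {M : Type*} [AddCommMonoid M]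
    (f : DihedralGroup n → M) : ∑ x, f x = ∑ i, f (r i) + ∑ i, f (sr i) := by
  rw [← equivSum.symm.sum_comp, Fintype.sum_sum_type]
  rfl

theorem powerGraph_adj_r_r {i j : ZMod n} :
    (powerGraph (DihedralGroup n)).Adj (r i) (r j) ↔
      (powerGraph (Multiplicative (ZMod n))).Adj (.ofAdd i) (.ofAdd j) :=
  powerGraph_adj_map_iff (f := rotationHom) (x := Multiplicative.ofAdd i)
    (y := Multiplicative.ofAdd j) rotationHom_injective

theorem sr_notMem_zpowers_r (i j : ZMod n) : sr i ∉ zpowers (r j) := by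
  rintro ⟨k, hk⟩
  simp at hk

theorem powerGraph_adj_r_sr {i j : ZMod n} :
    (powerGraph (DihedralGroup n)).Adj (r i) (sr j) ↔ i = 0 := by
  simp [powerGraph, mem_zpowers_iff_of_orderOf_eq_two (orderOf_sr j), sr_notMem_zpowers_r,
    one_def, -r_zero]

theorem powerGraph_adj_sr_r {i j : ZMod n} :
    (powerGraph (DihedralGroup n)).Adj (sr i) (r j) ↔ j = 0 :=
  (powerGraph _).adj_comm _ _ |>.trans powerGraph_adj_r_sr

theorem not_powerGraph_adj_sr_sr {i j : ZMod n} :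
    ¬(powerGraph (DihedralGroup n)).Adj (sr i) (sr j) := by
  simp only [powerGraph, ne_eq, sr.injEq, mem_zpowers_iff_of_orderOf_eq_two (orderOf_sr _),
    one_def, reduceCtorEq, false_or, not_and, not_or]
  exact fun h => ⟨h, Ne.symm h⟩

theorem ncard_edgeSet_powerGraph [NeZero n] :
    (powerGraph (DihedralGroup n)).edgeSet.ncard =
      (powerGraph (Multiplicative (ZMod n))).edgeSet.ncard + n := by
  classical
  have hD := (powerGraph (DihedralGroup n)).two_mul_ncard_edgeSet_eq_card_adj
  have hC := (powerGraph (Multiplicative (ZMod n))).two_mul_ncard_edgeSet_eq_card_adj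
  suffices #{z : DihedralGroup n × DihedralGroup n | (powerGraph _).Adj z.1 z.2} =
      #{z : Multiplicative (ZMod n) × Multiplicative (ZMod n) | (powerGraph _).Adj z.1 z.2} +
        2 * n by
    omega
  have hrot (g : Multiplicative (ZMod n) → Multiplicative (ZMod n) → ℕ) :
      ∑ x, ∑ y, g x y = ∑ i : ZMod n, ∑ j : ZMod n, g (.ofAdd i) (.ofAdd j) :=
    (Fintype.sum_equiv Multiplicative.ofAdd _ _ fun _ =>
      Fintype.sum_equiv Multiplicative.ofAdd _ _ fun _ => rfl).symm
  simp only [card_filter, Fintype.sum_prod_type, sum_eq_sum_r_add_sum_sr, hrot]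
  simp [powerGraph_adj_r_r, powerGraph_adj_r_sr, powerGraph_adj_sr_r, not_powerGraph_adj_sr_sr,
    sum_add_distrib, two_mul, add_assoc]

end DihedralGroup

/-- The number of edges of the power graph of `D_{2pq}`:
`2 · |E| = (2pq - 1) + (p-1)(q-1)(pq - 1) + (q-1)(pq - p) + (p-1)(pq - q) + pq`. -/
theorem edge_count_dihedral (p q : ℕ) (hp : p.Prime) (hq : q.Prime) (hpq : p ≠ q) :
    2 * ((powerGraph (DihedralGroup (p * q))).edgeSet).ncard
      = (2 * p * q - 1) + (p - 1) * (q - 1) * (p * q - 1) + (q - 1) * (p * q - p)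
        + (p - 1) * (p * q - q) + p * q := by
  have : NeZero (p * q) := ⟨mul_ne_zero hp.ne_zero hq.ne_zero⟩
  have hcyclic := IsCyclic.two_mul_ncard_edgeSet_powerGraph_add
    (C := Multiplicative (ZMod (p * q))) hp hq hpq (by simp)
  rw [DihedralGroup.ncard_edgeSet_powerGraph]
  have hp1 : 1 ≤ p := hp.one_le
  have hq1 : 1 ≤ q := hq.one_le
  have hp_le : p ≤ p * q := Nat.le_mul_of_pos_right p hq.pos
  have hq_le : q ≤ p * q := Nat.le_mul_of_pos_left q hp.pos
  have hpq1 : 1 ≤ p * q := hp1.trans hp_le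
  have h2pq1 : 1 ≤ 2 * p * q := by rw [mul_assoc]; omega
  zify [hp1, hq1, hp_le, hq_le, hpq1, h2pq1] at hcyclic ⊢
  linear_combination hcyclic
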